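/- The root vertex degree D_n of a uniform random rooted map with n edges, rescaled by n, converges in distribution to the uniform law on [0,2]: for every t ∈ [0,2], lim_{n→∞} (Σ_{k=0}^{⌊tn⌋} d_{n,k}) / m(n) = t/2. -/

import Mathlib

/-!
For `n ≥ 1` the coefficients of `d_n` come in equal pairs: `d_{n,2a-1} = d_{n,2a} = E(a, n - a)`
for `1 ≤ a ≤ n`, where `E(a, c) = Σ_{s<a} m(a+c-1-s) (2s-1)‼`, and all other coefficients vanish.
Substituting this into the recurrence for `d_n` leaves two identities for `E`, which follow from
the recurrence for `m` by induction on `a`. Since `E(a, c)` grows along the diagonals `a + c = n`,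
every nonzero coefficient of `d_n` lies between `E(1, n-1) = m(n-1)` and `E(n, 0) = (2n-1)‼`, and
there are `2n` of them, adding up to `d_n(1) = m(n)`.

The two bounds are asymptotically equal: `m(k) / (2k+1)‼` is nondecreasing for `k ≥ 1`, which
bounds the terms of `(2n+1)‼ = E(n+1, 0)` other than `m(n)` and gives `(2n+1)‼ ≤ m(n) + 4 m(n-1)`,
while `m(n) ≥ (2n+1) m(n-1)`. So the partial sum up to `⌊tn⌋` carries a fraction
`⌊tn⌋ / 2n → t/2` of the total.
-/

open Polynomial Filter Finset
open scoped Nat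

namespace RootedMaps

theorem sum_antidiagonal_add_of_eq_zero {M : Type*} [AddCommMonoid M] {b : ℕ} {f : ℕ → ℕ → M}
    (hf : ∀ i j, j < b → f i j = 0) (c : ℕ) :
    ∑ p ∈ antidiagonal (c + b), f p.1 p.2 = ∑ p ∈ antidiagonal c, f p.1 (p.2 + b) := by
  induction b generalizing f with
  | zero => rfl
  | succ b ih =>
    rw [← Nat.add_assoc, Nat.sum_antidiagonal_succ', hf _ _ b.succ_pos, zero_add,
      ih fun i j hj => hf i (j + 1) (by omega)]
    simp only [Nat.add_assoc]

theorem coeff_X_mul_derivative {R : Type*} [CommRing R] (p : R[X]) (k : ℕ) :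
    (X * derivative p).coeff k = k * p.coeff k := by
  cases k with
  | zero => simp
  | succ k => rw [coeff_X_mul, coeff_derivative]; push_cast; ring

theorem doubleFactorial_mul_le {a : ℕ} (ha : 1 ≤ a) (b : ℕ) :
    (2 * a + 1)‼ * (2 * b + 3)‼ ≤ 3 * (2 * (a + b) + 1)‼ := by
  induction b with
  | zero => simp [mul_comm]
  | succ b ih =>
    rw [show 2 * (b + 1) + 3 = 2 * b + 3 + 2 by ring, show 2 * (a + (b + 1)) + 1 =
      2 * (a + b) + 1 + 2 by ring, Nat.doubleFactorial_add_two (2 * b + 3),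
      Nat.doubleFactorial_add_two (2 * (a + b) + 1)]
    calc (2 * a + 1)‼ * ((2 * b + 3 + 2) * (2 * b + 3)‼)
        = (2 * b + 5) * ((2 * a + 1)‼ * (2 * b + 3)‼) := by ring
      _ ≤ (2 * (a + b) + 1 + 2) * (3 * (2 * (a + b) + 1)‼) :=
        Nat.mul_le_mul (by omega) ih
      _ = _ := by ring

theorem mul_le_sum_range_succ {c : ℕ → ℝ} {L U : ℝ} {N : ℕ} (h0 : c 0 = 0)
    (hc : ∀ k, 1 ≤ k → k ≤ N → c k ∈ Set.Icc L U) {j : ℕ} (hj : j ≤ N) :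
    ∑ k ∈ range (j + 1), c k ∈ Set.Icc (j * L) (j * U) := by
  rw [sum_range_succ', h0, add_zero]
  have hterm : ∀ k ∈ range j, c (k + 1) ∈ Set.Icc L U := fun k hk =>
    hc (k + 1) (by omega) (by have := mem_range.1 hk; omega)
  constructor
  · simpa using card_nsmul_le_sum (range j) _ L fun k hk => (hterm k hk).1
  · simpa using sum_le_card_nsmul (range j) _ U fun k hk => (hterm k hk).2

theorem div_sum_range_succ_mem_Icc {c : ℕ → ℝ} {L U : ℝ} {N j : ℕ} (hL : 0 < L)
    (h0 : c 0 = 0) (hc : ∀ k, 1 ≤ k → k ≤ N → c k ∈ Set.Icc L U) (hj : j ≤ N) (hN : 0 < N) :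
    (∑ k ∈ range (j + 1), c k) / ∑ k ∈ range (N + 1), c k ∈
      Set.Icc ((j / N : ℝ) * (L / U)) ((j / N : ℝ) * (U / L)) := by
  obtain ⟨hA, hA'⟩ := mul_le_sum_range_succ h0 hc hj
  obtain ⟨hB, hB'⟩ := mul_le_sum_range_succ h0 hc le_rfl
  have hLU : L ≤ U := (hc N hN le_rfl).1.trans (hc N hN le_rfl).2
  have hN' : (0 : ℝ) < N := by exact_mod_cast hN
  have hU : 0 < U := hL.trans_le hLU
  have hNL : 0 < (N : ℝ) * L := mul_pos hN' hL
  have hjL : 0 ≤ (j : ℝ) * L := mul_nonneg j.cast_nonneg hL.le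
  constructor
  · calc (j / N : ℝ) * (L / U) = j * L / (N * U) := by field_simp
      _ ≤ _ := div_le_div₀ (hjL.trans hA) hA (hNL.trans_le hB) hB'
  · calc (∑ k ∈ range (j + 1), c k) / ∑ k ∈ range (N + 1), c k ≤ j * U / (N * L) :=
          div_le_div₀ (hjL.trans (hA.trans hA')) hA' hNL hB
      _ = (j / N : ℝ) * (U / L) := by field_simp

structure IsRootedMapCount (m : ℕ → ℕ) : Prop where
  zero : m 0 = 1
  succ : ∀ n, m (n + 1) = ∑ p ∈ antidiagonal n, m p.1 * m p.2 + (2 * n + 1) * m n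

/-- `evenDegreeCount m a c = Σ_{s<a} m(a+c-1-s) (2s-1)‼` (`evenDegreeCount_eq_sum`) is the common
value of `d_{a+c,2a-1}` and `d_{a+c,2a}`. In `ℕ`, `(2 * 0 - 1)‼ = 0‼ = 1` plays the role of
`(-1)‼ = 1`. -/
def evenDegreeCount (m : ℕ → ℕ) : ℕ → ℕ → ℕ
  | 0, _ => 0
  | a + 1, c => evenDegreeCount m a (c + 1) + m c * (2 * a - 1)‼

variable {m : ℕ → ℕ}

@[simp]
theorem evenDegreeCount_zero (c : ℕ) : evenDegreeCount m 0 c = 0 := rfl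

theorem evenDegreeCount_succ (a c : ℕ) :
    evenDegreeCount m (a + 1) c = evenDegreeCount m a (c + 1) + m c * (2 * a - 1)‼ := rfl

@[simp]
theorem evenDegreeCount_one (c : ℕ) : evenDegreeCount m 1 c = m c := by
  simp [evenDegreeCount_succ]

theorem evenDegreeCount_add_two (a c : ℕ) :
    evenDegreeCount m (a + 2) c = evenDegreeCount m (a + 1) (c + 1) + m c * (2 * a + 1)‼ :=
  rfl

theorem evenDegreeCount_le_succ (a c : ℕ) :
    evenDegreeCount m a (c + 1) ≤ evenDegreeCount m (a + 1) c :=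
  Nat.le_add_right _ _

theorem le_evenDegreeCount (a c : ℕ) : m (a + c) ≤ evenDegreeCount m (a + 1) c := by
  induction a generalizing c with
  | zero => simp
  | succ a ih =>
    calc m (a + 1 + c) = m (a + (c + 1)) := by rw [Nat.add_right_comm, Nat.add_assoc]
      _ ≤ evenDegreeCount m (a + 1) (c + 1) := ih (c + 1)
      _ ≤ _ := evenDegreeCount_le_succ _ _

theorem evenDegreeCount_le (a c : ℕ) :
    evenDegreeCount m a c ≤ evenDegreeCount m (a + c) 0 := by
  induction c generalizing a with
  | zero => rfl
  | succ c ih =>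
    calc evenDegreeCount m a (c + 1) ≤ evenDegreeCount m (a + 1) c := evenDegreeCount_le_succ _ _
      _ ≤ evenDegreeCount m (a + 1 + c) 0 := ih (a + 1)
      _ = _ := by rw [Nat.add_right_comm, Nat.add_assoc]

theorem evenDegreeCount_eq_sum (a c : ℕ) :
    evenDegreeCount m a c = ∑ s ∈ range a, m (c + a - 1 - s) * (2 * s - 1)‼ := by
  induction a generalizing c with
  | zero => simp
  | succ a ih =>
    rw [evenDegreeCount_succ, ih, sum_range_succ]
    congr 1
    · refine sum_congr rfl fun s hs => ?_
      rw [show c + 1 + a - 1 - s = c + (a + 1) - 1 - s by omega]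
    · rw [show c + (a + 1) - 1 - a = c by omega]

namespace IsRootedMapCount

theorem evenDegreeCount_zero_right_and_add_two (hm : IsRootedMapCount m) (a : ℕ) :
    evenDegreeCount m (a + 1) 0 = (2 * a + 1)‼ ∧
      ∀ c, evenDegreeCount m (a + 2) c = 2 * (a + 1 + c) * evenDegreeCount m (a + 1) c +
        ∑ p ∈ antidiagonal c, m p.1 * evenDegreeCount m (a + 1) p.2 := by
  induction a with
  | zero =>
    refine ⟨by simp [hm.zero], fun c => ?_⟩
    rw [evenDegreeCount_add_two]
    simp only [zero_add, evenDegreeCount_one, hm.succ c, Nat.doubleFactorial, mul_one]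
    ring
  | succ a ih =>
    obtain ⟨hdiag, hrec⟩ := ih
    have hdiag' : evenDegreeCount m (a + 2) 0 = (2 * (a + 1) + 1)‼ := by
      rw [hrec 0, show 2 * (a + 1) + 1 = 2 * a + 1 + 2 by ring, Nat.doubleFactorial_add_two]
      simp only [add_zero, hdiag, HasAntidiagonal.antidiagonal_zero, sum_singleton, hm.zero,
        one_mul]
      ring
    refine ⟨hdiag', fun c => ?_⟩
    rw [evenDegreeCount_add_two (a + 1), hrec (c + 1), Nat.sum_antidiagonal_succ', hdiag,
      show 2 * (a + 1) + 1 = 2 * a + 1 + 2 by ring, Nat.doubleFactorial_add_two, hm.succ c]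
    simp only [evenDegreeCount_add_two, mul_add, sum_add_distrib, ← mul_assoc, ← sum_mul]
    ring

theorem evenDegreeCount_zero_right (hm : IsRootedMapCount m) (a : ℕ) :
    evenDegreeCount m (a + 1) 0 = (2 * a + 1)‼ :=
  (hm.evenDegreeCount_zero_right_and_add_two a).1

theorem evenDegreeCount_add_two_eq (hm : IsRootedMapCount m) (a c : ℕ) :
    evenDegreeCount m (a + 2) c = 2 * (a + 1 + c) * evenDegreeCount m (a + 1) c +
      ∑ p ∈ antidiagonal c, m p.1 * evenDegreeCount m (a + 1) p.2 :=
  (hm.evenDegreeCount_zero_right_and_add_two a).2 c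

theorem evenDegreeCount_succ_succ_eq (hm : IsRootedMapCount m) (a c : ℕ) :
    evenDegreeCount m (a + 1) (c + 1) = (2 * a + 1) * evenDegreeCount m a (c + 1) +
      (2 * c + 1) * evenDegreeCount m (a + 1) c +
        ∑ p ∈ antidiagonal c, m p.1 * evenDegreeCount m (a + 1) p.2 := by
  induction a generalizing c with
  | zero =>
    simp only [zero_add, evenDegreeCount_one, hm.succ c, mul_zero, evenDegreeCount_zero]
    ring
  | succ a ih =>
    simp only [evenDegreeCount_add_two]
    rw [ih (c + 1), Nat.sum_antidiagonal_succ', hm.evenDegreeCount_zero_right,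
      evenDegreeCount_succ a (c + 1), Nat.doubleFactorial_add_one (2 * a), hm.succ c]
    simp only [mul_add, sum_add_distrib, ← mul_assoc, ← sum_mul]
    ring

end IsRootedMapCount

def degreeCount (m : ℕ → ℕ) (n k : ℕ) : ℕ :=
  if k = 0 then (if n = 0 then 1 else 0)
  else if k ≤ 2 * n then evenDegreeCount m ((k + 1) / 2) (n - (k + 1) / 2) else 0

theorem degreeCount_zero_right (n : ℕ) : degreeCount m n 0 = if n = 0 then 1 else 0 := rfl

theorem degreeCount_of_lt {n k : ℕ} (h : 2 * n < k) : degreeCount m n k = 0 := by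
  rw [degreeCount, if_neg (by omega), if_neg (by omega)]

theorem degreeCount_two_mul_add_one (a c : ℕ) :
    degreeCount m (c + a + 1) (2 * a + 1) = evenDegreeCount m (a + 1) c := by
  rw [degreeCount, if_neg (by omega), if_pos (by omega), show (2 * a + 1 + 1) / 2 = a + 1 by omega,
    show c + a + 1 - (a + 1) = c by omega]

theorem degreeCount_two_mul_add_two (a c : ℕ) :
    degreeCount m (c + a + 1) (2 * a + 2) = evenDegreeCount m (a + 1) c := by
  rw [degreeCount, if_neg (by omega), if_pos (by omega), show (2 * a + 2 + 1) / 2 = a + 1 by omega,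
    show c + a + 1 - (a + 1) = c by omega]

theorem degreeCount_two_mul (a c : ℕ) :
    degreeCount m (c + a + 1) (2 * a) = evenDegreeCount m a (c + 1) := by
  cases a with
  | zero => simp [degreeCount_zero_right]
  | succ a =>
    rw [show c + (a + 1) + 1 = c + 1 + a + 1 by ring, show 2 * (a + 1) = 2 * a + 2 by ring,
      degreeCount_two_mul_add_two]

theorem sum_antidiagonal_degreeCount (a c : ℕ) {k : ℕ} (hk : k = 2 * a + 1 ∨ k = 2 * a + 2) :
    ∑ p ∈ antidiagonal (c + a + 1), m p.1 * degreeCount m p.2 k =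
      ∑ p ∈ antidiagonal c, m p.1 * evenDegreeCount m (a + 1) p.2 := by
  rw [Nat.add_assoc, sum_antidiagonal_add_of_eq_zero (f := fun i j => m i * degreeCount m j k)
    fun i j hj => by rw [degreeCount_of_lt (by omega), mul_zero]]
  refine sum_congr rfl fun p _ => ?_
  rcases hk with rfl | rfl
  · rw [← Nat.add_assoc, degreeCount_two_mul_add_one]
  · rw [← Nat.add_assoc, degreeCount_two_mul_add_two]

theorem degreeCount_succ_one {R : Type*} [CommRing R] (n : ℕ) :
    (degreeCount m (n + 1) 1 : R) =
      2 * n * degreeCount m n 0 + ∑ p ∈ antidiagonal n, (m p.1 : R) * degreeCount m p.2 0 := by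
  rw [show n + 1 = n + 0 + 1 from rfl, degreeCount_two_mul_add_one 0 n, evenDegreeCount_one]
  rcases n with _ | n
  · simp [degreeCount_zero_right]
  · simp [Nat.sum_antidiagonal_succ', degreeCount_zero_right]

namespace IsRootedMapCount

theorem degreeCount_two_mul_self (hm : IsRootedMapCount m) (n : ℕ) :
    degreeCount m n (2 * n) = (2 * n - 1)‼ := by
  cases n with
  | zero => rfl
  | succ a =>
    rw [show a + 1 = 0 + a + 1 by ring, show 2 * (0 + a + 1) = 2 * a + 2 by ring,
      degreeCount_two_mul_add_two, hm.evenDegreeCount_zero_right,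
      show 2 * a + 2 - 1 = 2 * a + 1 by omega]

theorem degreeCount_succ_two_mul_add_two (hm : IsRootedMapCount m) (a c : ℕ) :
    degreeCount m (c + a + 2) (2 * a + 2) =
      (2 * a + 1) * degreeCount m (c + a + 1) (2 * a) +
        (2 * c + 1) * degreeCount m (c + a + 1) (2 * a + 1) +
          ∑ p ∈ antidiagonal (c + a + 1), m p.1 * degreeCount m p.2 (2 * a + 1) := by
  rw [show c + a + 2 = c + 1 + a + 1 by ring, degreeCount_two_mul_add_two, degreeCount_two_mul,
    degreeCount_two_mul_add_one, sum_antidiagonal_degreeCount a c (Or.inl rfl),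
    hm.evenDegreeCount_succ_succ_eq]

theorem degreeCount_succ_two_mul_add_three (hm : IsRootedMapCount m) (a c : ℕ) :
    degreeCount m (c + a + 2) (2 * a + 3) =
      (2 * a + 2) * degreeCount m (c + a + 1) (2 * a + 1) +
        2 * c * degreeCount m (c + a + 1) (2 * a + 2) +
          ∑ p ∈ antidiagonal (c + a + 1), m p.1 * degreeCount m p.2 (2 * a + 2) := by
  rw [show c + a + 2 = c + (a + 1) + 1 by ring, show 2 * a + 3 = 2 * (a + 1) + 1 by ring,
    degreeCount_two_mul_add_one, degreeCount_two_mul_add_one,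
    degreeCount_two_mul_add_two, sum_antidiagonal_degreeCount a c (Or.inr rfl),
    hm.evenDegreeCount_add_two_eq]
  ring

theorem degreeCount_mem_Icc (hm : IsRootedMapCount m) {n k : ℕ} (hk : 1 ≤ k)
    (hkn : k ≤ 2 * (n + 1)) : degreeCount m (n + 1) k ∈ Set.Icc (m n) (2 * n + 1)‼ := by
  obtain ⟨a, hka⟩ : ∃ a, k = 2 * a + 1 ∨ k = 2 * a + 2 := ⟨(k - 1) / 2, by omega⟩
  obtain ⟨c, rfl⟩ : ∃ c, n = c + a := ⟨n - a, by omega⟩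
  have hE : degreeCount m (c + a + 1) k = evenDegreeCount m (a + 1) c := by
    rcases hka with rfl | rfl
    exacts [degreeCount_two_mul_add_one a c, degreeCount_two_mul_add_two a c]
  rw [hE, ← hm.evenDegreeCount_zero_right]
  refine ⟨by rw [add_comm c]; exact le_evenDegreeCount a c, ?_⟩
  rw [show c + a + 1 = a + 1 + c by ring]
  exact evenDegreeCount_le (a + 1) c

variable {R : Type*} [CommRing R]

theorem degreeCount_succ_add_two (hm : IsRootedMapCount m) (n k : ℕ) :
    (degreeCount m (n + 1) (k + 2) : R) =
      (k + 1) * degreeCount m n k + (2 * n - (k + 1)) * degreeCount m n (k + 1) +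
        ∑ p ∈ antidiagonal n, (m p.1 : R) * degreeCount m p.2 (k + 1) := by
  have hsum_zero : 2 * n < k + 1 →
      ∑ p ∈ antidiagonal n, (m p.1 : R) * degreeCount m p.2 (k + 1) = 0 := fun h =>
    sum_eq_zero fun p hp => by
      rw [degreeCount_of_lt (by have := mem_antidiagonal.1 hp; omega), Nat.cast_zero, mul_zero]
  rcases lt_or_ge (2 * n) k with hlt | hle
  · rw [degreeCount_of_lt (by omega), degreeCount_of_lt hlt, degreeCount_of_lt (by omega),
      hsum_zero (by omega)]
    simp
  obtain ⟨a, rfl | rfl⟩ := Nat.even_or_odd' k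
  · rcases (Nat.le_iff_lt_or_eq.1 (by omega : a ≤ n)) with ha | rfl
    · obtain ⟨c, rfl⟩ : ∃ c, n = c + a + 1 := ⟨n - a - 1, by omega⟩
      rw [show c + a + 1 + 1 = c + a + 2 by ring, hm.degreeCount_succ_two_mul_add_two]
      push_cast
      ring
    · rw [show 2 * a + 2 = 2 * (a + 1) by ring, hm.degreeCount_two_mul_self,
        hm.degreeCount_two_mul_self, degreeCount_of_lt (by omega), hsum_zero (by omega),
        show 2 * (a + 1) - 1 = 2 * a + 1 by omega, Nat.doubleFactorial_add_one (2 * a)]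
      push_cast
      ring
  · obtain ⟨c, rfl⟩ : ∃ c, n = c + a + 1 := ⟨n - a - 1, by omega⟩
    rw [show c + a + 1 + 1 = c + a + 2 by ring, show 2 * a + 1 + 2 = 2 * a + 3 by ring,
      hm.degreeCount_succ_two_mul_add_three]
    push_cast
    ring

end IsRootedMapCount

structure IsRootDegreePoly {R : Type*} [CommRing R] (m : ℕ → ℕ) (d : ℕ → R[X]) : Prop where
  zero : d 0 = 1
  succ : ∀ n, d (n + 1) = X ^ 2 * d n + C (2 * (n : R)) * X * d n +
    X * ∑ p ∈ antidiagonal n, C (m p.1 : R) * d p.2 - X ^ 2 * (1 - X) * derivative (d n)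

namespace IsRootDegreePoly

variable {R : Type*} [CommRing R] {d : ℕ → R[X]}

theorem coeff_succ_zero (hd : IsRootDegreePoly m d) (n : ℕ) : (d (n + 1)).coeff 0 = 0 := by
  simp [hd.succ n, mul_assoc]

theorem coeff_succ_one (hd : IsRootDegreePoly m d) (n : ℕ) :
    (d (n + 1)).coeff 1 =
      2 * n * (d n).coeff 0 + ∑ p ∈ antidiagonal n, (m p.1 : R) * (d p.2).coeff 0 := by
  simp [hd.succ n, mul_assoc, coeff_X_pow_mul']

theorem coeff_succ_add_two (hd : IsRootDegreePoly m d) (n k : ℕ) :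
    (d (n + 1)).coeff (k + 2) =
      (k + 1) * (d n).coeff k + (2 * n - (k + 1)) * (d n).coeff (k + 1) +
        ∑ p ∈ antidiagonal n, (m p.1 : R) * (d p.2).coeff (k + 1) := by
  rw [hd.succ n, show X ^ 2 * (1 - X) * derivative (d n) =
    X ^ 2 * (derivative (d n) - X * derivative (d n)) by ring]
  simp only [coeff_sub, coeff_add, coeff_X_pow_mul, mul_assoc, coeff_C_mul, coeff_X_mul,
    finsetSum_coeff, coeff_derivative, coeff_X_mul_derivative]
  ring

theorem coeff_eq_degreeCount (hd : IsRootDegreePoly m d) (hm : IsRootedMapCount m) (n k : ℕ) :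
    (d n).coeff k = degreeCount m n k := by
  induction n using Nat.strong_induction_on generalizing k with
  | _ n ih =>
    rcases n with _ | n
    · by_cases hk : k = 0 <;> simp [hd.zero, coeff_one, degreeCount, hk]
    have ih_sum : ∀ j, ∑ p ∈ antidiagonal n, (m p.1 : R) * (d p.2).coeff j =
        ∑ p ∈ antidiagonal n, (m p.1 : R) * degreeCount m p.2 j := fun j =>
      sum_congr rfl fun p hp => by rw [ih p.2 (by have := mem_antidiagonal.1 hp; omega)]
    rcases k with _ | _ | k
    · simp [hd.coeff_succ_zero, degreeCount_zero_right]
    · rw [hd.coeff_succ_one, ih_sum, ih n n.lt_succ_self, degreeCount_succ_one]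
    · rw [hd.coeff_succ_add_two, ih_sum, ih n n.lt_succ_self, ih n n.lt_succ_self,
        hm.degreeCount_succ_add_two]

end IsRootDegreePoly

namespace IsRootedMapCount

theorem pos (hm : IsRootedMapCount m) (n : ℕ) : 0 < m n := by
  induction n with
  | zero => simp [hm.zero]
  | succ n ih => rw [hm.succ]; positivity

theorem one (hm : IsRootedMapCount m) : m 1 = 2 := by
  simp [hm.succ 0, hm.zero]

theorem le_doubleFactorial (hm : IsRootedMapCount m) (n : ℕ) : m n ≤ (2 * n + 1)‼ := by
  calc m n = m (0 + n) := by rw [zero_add]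
    _ ≤ evenDegreeCount m 1 n := le_evenDegreeCount 0 n
    _ ≤ evenDegreeCount m (n + 1) 0 := by rw [add_comm n]; exact evenDegreeCount_le 1 n
    _ = _ := hm.evenDegreeCount_zero_right n

theorem mul_le_succ (hm : IsRootedMapCount m) {n : ℕ} (hn : 1 ≤ n) :
    (2 * n + 3) * m n ≤ m (n + 1) := by
  have hpair : 2 * m n ≤ ∑ p ∈ antidiagonal n, m p.1 * m p.2 := by
    calc 2 * m n = ∑ p ∈ {(0, n), (n, 0)}, m p.1 * m p.2 := by
          rw [sum_pair (by simp only [ne_eq, Prod.mk.injEq, not_and]; omega), hm.zero]; ring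
      _ ≤ _ := sum_le_sum_of_subset fun p hp => by
          rcases mem_insert.1 hp with rfl | hp
          · simp
          · rw [mem_singleton.1 hp]; simp
  rw [hm.succ]
  linarith

theorem mul_doubleFactorial_le (hm : IsRootedMapCount m) {a : ℕ} (ha : 1 ≤ a) (b : ℕ) :
    m a * (2 * (a + b) + 1)‼ ≤ m (a + b) * (2 * a + 1)‼ := by
  induction b with
  | zero => rfl
  | succ b ih =>
    rw [show 2 * (a + (b + 1)) + 1 = 2 * (a + b) + 1 + 2 by ring, Nat.doubleFactorial_add_two,
      ← Nat.add_assoc]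
    calc m a * ((2 * (a + b) + 1 + 2) * (2 * (a + b) + 1)‼)
        = (2 * (a + b) + 3) * (m a * (2 * (a + b) + 1)‼) := by ring
      _ ≤ (2 * (a + b) + 3) * (m (a + b) * (2 * a + 1)‼) := Nat.mul_le_mul_left _ ih
      _ = (2 * (a + b) + 3) * m (a + b) * (2 * a + 1)‼ := by ring
      _ ≤ m (a + b + 1) * (2 * a + 1)‼ := Nat.mul_le_mul_right _ (hm.mul_le_succ (by omega))

theorem mul_mul_doubleFactorial_le (hm : IsRootedMapCount m) {N s : ℕ} (hs : s < N) :
    (2 * N + 3) * (m (N - s) * (2 * s + 3)‼) ≤ 3 * m (N + 1) := by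
  have hgrowth := hm.mul_doubleFactorial_le (a := N - s) (by omega) (s + 1)
  have hprod := doubleFactorial_mul_le (a := N - s) (by omega) s
  rw [show N - s + (s + 1) = N + 1 by omega] at hgrowth
  rw [show N - s + s = N by omega] at hprod
  have hN : (2 * (N + 1) + 1)‼ = (2 * N + 3) * (2 * N + 1)‼ := by
    rw [show 2 * (N + 1) + 1 = 2 * N + 1 + 2 by ring, Nat.doubleFactorial_add_two]
  refine Nat.le_of_mul_le_mul_right ?_ (Nat.doubleFactorial_pos (2 * N + 1))
  calc (2 * N + 3) * (m (N - s) * (2 * s + 3)‼) * (2 * N + 1)‼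
      = m (N - s) * (2 * (N + 1) + 1)‼ * (2 * s + 3)‼ := by rw [hN]; ring
    _ ≤ m (N + 1) * (2 * (N - s) + 1)‼ * (2 * s + 3)‼ := Nat.mul_le_mul_right _ hgrowth
    _ = m (N + 1) * ((2 * (N - s) + 1)‼ * (2 * s + 3)‼) := by ring
    _ ≤ m (N + 1) * (3 * (2 * N + 1)‼) := Nat.mul_le_mul_left _ hprod
    _ = 3 * m (N + 1) * (2 * N + 1)‼ := by ring

theorem sum_range_mul_doubleFactorial_le (hm : IsRootedMapCount m) (n : ℕ) :
    ∑ s ∈ range (n + 1), m (n - s) * (2 * s + 1)‼ ≤ 4 * m n := by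
  rcases n with _ | N
  · simp [hm.zero]
  have hlast : 2 * (2 * N + 3)‼ ≤ 3 * m (N + 1) := by
    have h := hm.mul_doubleFactorial_le le_rfl N
    rwa [hm.one, add_comm 1 N, show 2 * (N + 1) + 1 = 2 * N + 3 by ring,
      show (2 * 1 + 1)‼ = 3 from rfl, mul_comm _ 3] at h
  have hmiddle : (2 * N + 3) * ∑ s ∈ range N, m (N - s) * (2 * s + 3)‼ ≤ 3 * N * m (N + 1) := by
    rw [mul_sum]
    calc _ ≤ ∑ _s ∈ range N, 3 * m (N + 1) :=
          sum_le_sum fun s hs => hm.mul_mul_doubleFactorial_le (mem_range.1 hs)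
      _ = _ := by rw [sum_const, card_range, smul_eq_mul]; ring
  rw [sum_range_succ, sum_range_succ']
  simp only [Nat.sub_self, hm.zero, Nat.sub_zero, one_mul, mul_zero, zero_add, mul_one,
    show 1‼ = 1 from rfl,
    show ∀ s, N + 1 - (s + 1) = N - s from fun s => by omega,
    show ∀ s, 2 * (s + 1) + 1 = 2 * s + 3 from fun s => by ring]
  refine Nat.le_of_mul_le_mul_left ?_ (by omega : 0 < 2 * N + 3)
  nlinarith [Nat.mul_le_mul_left N hlast]

theorem doubleFactorial_le_add (hm : IsRootedMapCount m) (n : ℕ) :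
    (2 * (n + 1) + 1)‼ ≤ m (n + 1) + 4 * m n := by
  rw [← hm.evenDegreeCount_zero_right, evenDegreeCount_eq_sum, sum_range_succ']
  simp only [show ∀ s, 0 + (n + 1 + 1) - 1 - (s + 1) = n - s from fun s => by omega,
    show ∀ s, 2 * (s + 1) - 1 = 2 * s + 1 from fun s => by omega]
  simpa [add_comm] using hm.sum_range_mul_doubleFactorial_le n

theorem tendsto_doubleFactorial_div (hm : IsRootedMapCount m) :
    Tendsto (fun n => ((2 * n + 1)‼ : ℝ) / m n) atTop (nhds 1) := by
  rw [← tendsto_add_atTop_iff_nat 1]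
  have hupper : Tendsto (fun n : ℕ => 1 + 2 / (n : ℝ)) atTop (nhds 1) := by
    simpa using tendsto_const_nhds.add (tendsto_const_div_atTop_nhds_zero_nat (2 : ℝ))
  have hpos (n : ℕ) : (0 : ℝ) < m (n + 1) := by exact_mod_cast hm.pos (n + 1)
  refine tendsto_of_tendsto_of_tendsto_of_le_of_le' tendsto_const_nhds hupper
    (Eventually.of_forall fun n => ?_) (eventually_ge_atTop 1 |>.mono fun n hn => ?_)
  · rw [one_le_div₀ (hpos n)]
    exact_mod_cast hm.le_doubleFactorial (n + 1)
  · have hn' : (1 : ℝ) ≤ n := by exact_mod_cast hn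
    have hadd : ((2 * (n + 1) + 1)‼ : ℝ) ≤ m (n + 1) + 4 * m n := by
      exact_mod_cast hm.doubleFactorial_le_add n
    have hgrowth : ((2 * n + 3 : ℕ) : ℝ) * m n ≤ m (n + 1) := by
      exact_mod_cast hm.mul_le_succ hn
    push_cast at hgrowth
    have hsmall : 4 * (m n : ℝ) ≤ 2 / n * m (n + 1) := by
      rw [div_mul_eq_mul_div, le_div_iff₀ (by positivity)]
      nlinarith [(hm.pos n : 0 < m n)]
    rw [div_le_iff₀ (hpos n)]
    linarith

end IsRootedMapCount

namespace IsRootDegreePoly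

variable {R : Type*} [CommRing R] {d : ℕ → R[X]}

theorem eval_one (hd : IsRootDegreePoly m d) (hm : IsRootedMapCount m) (n : ℕ) :
    (d n).eval 1 = m n := by
  induction n using Nat.strong_induction_on with
  | _ n ih =>
    rcases n with _ | n
    · simp [hd.zero, hm.zero]
    rw [hd.succ, hm.succ]
    simp only [eval_sub, eval_add, eval_mul, eval_pow, eval_X, eval_C, eval_finsetSum,
      Polynomial.eval_one, one_pow, sub_self, zero_mul, mul_zero, sub_zero, one_mul, mul_one]
    rw [ih n n.lt_succ_self, sum_congr rfl fun p hp =>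
      by rw [ih p.2 (by have := mem_antidiagonal.1 hp; omega)]]
    push_cast
    ring

theorem sum_coeff_eq (hd : IsRootDegreePoly m d) (hm : IsRootedMapCount m) (n : ℕ) :
    ∑ k ∈ range (2 * n + 1), (d n).coeff k = m n := by
  have hdeg : (d n).natDegree < 2 * n + 1 := Nat.lt_succ_of_le <|
    natDegree_le_iff_coeff_eq_zero.2 fun k hk => by
      rw [hd.coeff_eq_degreeCount hm, degreeCount_of_lt hk, Nat.cast_zero]
  simpa using (eval_eq_sum_range' hdeg 1).symm.trans (hd.eval_one hm n)

end IsRootDegreePoly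

theorem IsRootDegreePoly.partialSum_div_mem_Icc {d : ℕ → ℝ[X]} (hd : IsRootDegreePoly m d)
    (hm : IsRootedMapCount m) {n j : ℕ} (hj : j ≤ 2 * (n + 1)) :
    (∑ k ∈ range (j + 1), (d (n + 1)).coeff k) / m (n + 1) ∈
      Set.Icc ((j / (2 * (n + 1) : ℕ) : ℝ) * (m n / (2 * n + 1)‼))
        ((j / (2 * (n + 1) : ℕ) : ℝ) * ((2 * n + 1)‼ / m n)) := by
  rw [← hd.sum_coeff_eq hm (n + 1)]
  refine div_sum_range_succ_mem_Icc (by exact_mod_cast hm.pos n : (0 : ℝ) < m n)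
    (hd.coeff_succ_zero n) (fun k hk hkn => ?_) hj (by omega)
  rw [hd.coeff_eq_degreeCount hm]
  obtain ⟨hlo, hhi⟩ := hm.degreeCount_mem_Icc hk hkn
  exact ⟨by exact_mod_cast hlo, by exact_mod_cast hhi⟩

end RootedMaps

open RootedMaps

theorem root_degree_uniform_law
    (m : ℕ → ℕ) (hm0 : m 0 = 1)
    (hm : ∀ n : ℕ, m (n + 1) =
      (∑ k ∈ Finset.range (n + 1), m k * m (n - k)) + (2 * (n + 1) - 1) * m n)
    (d : ℕ → Polynomial ℝ) (hd0 : d 0 = 1)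
    (hd : ∀ n : ℕ, d (n + 1) =
      X ^ 2 * d n + C (2 * (n : ℝ)) * X * d n +
        X * (∑ i ∈ Finset.range (n + 1), C ((m i : ℝ)) * d (n - i)) -
        X ^ 2 * (1 - X) * derivative (d n)) :
    ∀ t : ℝ, 0 ≤ t → t ≤ 2 →
      Tendsto
        (fun n : ℕ =>
          (∑ k ∈ Finset.range (⌊t * n⌋₊ + 1), (d n).coeff k) / (m n : ℝ))
        atTop (nhds (t / 2)) := by
  intro t ht0 ht2
  have hm' : IsRootedMapCount m := ⟨hm0, fun n => by
    rw [hm n, Nat.sum_antidiagonal_eq_sum_range_succ (fun i j => m i * m j)]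
    congr 2⟩
  have hd' : IsRootDegreePoly m d := ⟨hd0, fun n => by
    rw [hd n, Nat.sum_antidiagonal_eq_sum_range_succ (fun i j => C (m i : ℝ) * d j)]⟩
  have hfloor : Tendsto (fun n : ℕ => (⌊t * ↑(n + 1)⌋₊ / ↑(2 * (n + 1)) : ℝ)) atTop
      (nhds (t / 2)) := by
    refine (((tendsto_nat_floor_mul_div_atTop ht0).comp (tendsto_natCast_atTop_atTop.comp
      (tendsto_add_atTop_nat 1))).div_const 2).congr fun n => ?_
    simp only [Function.comp_apply, Nat.cast_mul, Nat.cast_ofNat]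
    ring
  have hbounds := fun n : ℕ => hd'.partialSum_div_mem_Icc hm' (j := ⌊t * ↑(n + 1)⌋₊) <|
    Nat.floor_le_of_le (by push_cast; nlinarith)
  rw [← tendsto_add_atTop_iff_nat 1]
  exact tendsto_of_tendsto_of_tendsto_of_le_of_le
    (by simpa using hfloor.mul (hm'.tendsto_doubleFactorial_div.inv₀ one_ne_zero))
    (by simpa using hfloor.mul hm'.tendsto_doubleFactorial_div)
    (fun n => (hbounds n).1) (fun n => (hbounds n).2)
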